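/- Suppose a hypergeometric series h(x) = Σ h_k x^k with parameters in ℤ_(p) has good reduction mod p and the drift exponent ν_0 = (m−n)/(p−1) is negative, i.e., n > m. Then only finitely many coefficients of h(x) are nonzero modulo p; i.e., h(x) mod p is a polynomial over F_p. -/

import Mathlib

open Finset


lemma card_filter_mod (k q r : ℕ) (hr : r < q) :
    k ≤ (((range k).filter (fun t => t % q = r)).card + 1) * q ∧
    (((range k).filter (fun t => t % q = r)).card) * q ≤ k + q := by
  have hq : 0 < q := lt_of_le_of_lt (Nat.zero_le r) hr
  constructor
  · by_cases hrk : r < k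
    · set D := k - 1 - r with hD
      have hcard : (D / q + 1) ≤ ((range k).filter (fun t => t % q = r)).card := by
        have := Finset.card_le_card_of_injOn (fun s => q * s + r)
          (s := range (D / q + 1)) (t := (range k).filter (fun t => t % q = r))
          (fun s hs => by
            simp only [Finset.mem_coe, mem_range, Nat.lt_succ_iff] at hs
            have h1 : q * s ≤ q * (D / q) := Nat.mul_le_mul_left q hs
            have h2 : q * (D / q) ≤ D := Nat.mul_div_le D q
            simp only [Finset.mem_coe, mem_filter, mem_range]
            refine ⟨by omega, ?_⟩
            rw [Nat.mul_add_mod, Nat.mod_eq_of_lt hr])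
          (fun a _ b _ hab => by
            simp only at hab
            have : q * a = q * b := by omega
            exact Nat.eq_of_mul_eq_mul_left hq this)
        simpa [Finset.card_range] using this
      have h3 : (((range k).filter (fun t => t % q = r)).card + 1) * q ≥ (D / q + 2) * q :=
        Nat.mul_le_mul_right q (by omega)
      have h4 : (D / q + 2) * q = q * (D / q) + 2 * q := by ring
      have h5 : q * (D / q) + D % q = D := Nat.div_add_mod D q
      have h6 : D % q < q := Nat.mod_lt D hq
      omega
    · have : k ≤ r := le_of_not_gt hrk
      calc k ≤ q := by omega
        _ ≤ _ := Nat.le_mul_of_pos_left q (Nat.succ_pos _)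
  · have hcard : ((range k).filter (fun t => t % q = r)).card ≤ k / q + 1 := by
      have := Finset.card_le_card_of_injOn (fun t => t / q)
        (s := (range k).filter (fun t => t % q = r)) (t := range (k / q + 1))
        (fun t ht => by
          simp only [Finset.mem_coe, mem_filter, mem_range] at ht
          simp only [Finset.mem_coe, mem_range, Nat.lt_succ_iff]
          exact Nat.div_le_div_right (le_of_lt ht.1))
        (fun a ha b hb hab => by
          simp only [Finset.coe_filter, Set.mem_setOf_eq, mem_range] at ha hb
          have ha2 := Nat.div_add_mod a q
          have hb2 := Nat.div_add_mod b q
          simp only at hab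
          have : q * (a / q) = q * (b / q) := by rw [hab]
          omega)
      simpa [Finset.card_range] using this
    calc ((range k).filter (fun t => t % q = r)).card * q ≤ (k / q + 1) * q :=
          Nat.mul_le_mul_right q hcard
      _ = k / q * q + q := by ring
      _ ≤ k + q := by have := Nat.div_mul_le_self k q; omega

lemma geom_upper (p k : ℕ) (hp : 2 ≤ p) :
    ∀ E : ℕ, (p - 1) * (∑ e ∈ Icc 1 E, k / p ^ e) + k / p ^ E ≤ k := by
  obtain ⟨c, rfl⟩ : ∃ c, p = c + 1 := ⟨p - 1, by omega⟩
  simp only [Nat.add_sub_cancel]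
  intro E
  induction E with
  | zero => simp
  | succ E ih =>
    rw [Finset.sum_Icc_succ_top (by omega)]
    set T := ∑ e ∈ Icc 1 E, k / (c + 1) ^ e with hT
    set X := k / (c + 1) ^ E with hX
    have hq : k / (c + 1) ^ (E + 1) = X / (c + 1) := by
      rw [hX, Nat.div_div_eq_div_mul, ← pow_succ]
    rw [hq]
    have h1 : (c + 1) * (X / (c + 1)) ≤ X := Nat.mul_div_le X (c + 1)
    calc c * (T + X / (c + 1)) + X / (c + 1)
        = c * T + (c + 1) * (X / (c + 1)) := by ring
      _ ≤ c * T + X := by omega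
      _ ≤ k := ih

lemma geom_lower (p k : ℕ) (hp : 2 ≤ p) :
    ∀ E : ℕ, k ≤ k / p ^ E + (p - 1) * (∑ e ∈ Icc 1 E, k / p ^ e) + E * (p - 1) := by
  obtain ⟨c, rfl⟩ : ∃ c, p = c + 1 := ⟨p - 1, by omega⟩
  simp only [Nat.add_sub_cancel]
  intro E
  induction E with
  | zero => simp
  | succ E ih =>
    rw [Finset.sum_Icc_succ_top (by omega)]
    set T := ∑ e ∈ Icc 1 E, k / (c + 1) ^ e with hT
    set X := k / (c + 1) ^ E with hX
    have hq : k / (c + 1) ^ (E + 1) = X / (c + 1) := by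
      rw [hX, Nat.div_div_eq_div_mul, ← pow_succ]
    rw [hq]
    have h1 : (c + 1) * (X / (c + 1)) + X % (c + 1) = X := Nat.div_add_mod X (c + 1)
    have h2 : X % (c + 1) < c + 1 := Nat.mod_lt X (by omega)
    have key : X / (c + 1) + c * (T + X / (c + 1)) + (E + 1) * c
        = (c + 1) * (X / (c + 1)) + c * T + E * c + c := by ring
    calc k ≤ X + c * T + E * c := ih
      _ ≤ (c + 1) * (X / (c + 1)) + c * T + E * c + c := by omega
      _ = X / (c + 1) + c * (T + X / (c + 1)) + (E + 1) * c := by rw [key]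

lemma aux2 : ∀ c : ℕ, 4 * c + 2 ≤ 3 * 4 ^ c := by
  intro c
  induction c with
  | zero => norm_num
  | succ c ih =>
    have h1 : 4 ^ (c + 1) = 4 * 4 ^ c := by rw [pow_succ]; ring
    have h2 : 1 ≤ 4 ^ c := Nat.one_le_pow _ _ (by norm_num)
    omega

lemma aux1 : ∀ c : ℕ, 2 * c * c ≤ 4 ^ c := by
  intro c
  induction c with
  | zero => norm_num
  | succ c ih =>
    have h1 : 4 ^ (c + 1) = 4 * 4 ^ c := by rw [pow_succ]; ring
    have h2 := aux2 c
    have h3 : 2 * (c + 1) * (c + 1) = 2 * c * c + (4 * c + 2) := by ring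
    omega

lemma lin_le_pow (c : ℕ) : ∀ t : ℕ, 2 * c ≤ t → c * t ≤ 2 ^ t := by
  intro t
  induction t with
  | zero => intro ht; simp
  | succ t ih =>
    intro ht
    by_cases h2 : 2 * c ≤ t
    · have h3 := ih h2
      have h4 : t < 2 ^ t := Nat.lt_two_pow_self
      have h5 : 2 ^ (t + 1) = 2 * 2 ^ t := by rw [pow_succ]; ring
      have h6 : c * (t + 1) = c * t + c := by ring
      omega
    · have h7 : t + 1 = 2 * c := by omega
      rw [h7]
      have h8 : 2 ^ (2 * c) = 4 ^ c := by
        rw [pow_mul]; norm_num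
      have h9 : c * (2 * c) = 2 * c * c := by ring
      rw [h8, h9]
      exact aux1 c

lemma event (p C A B : ℕ) (hp : 2 ≤ p) :
    ∃ K : ℕ, ∀ k : ℕ, K ≤ k → C * (Nat.log p (A + k * B) + 2) ≤ k := by
  set g := Nat.log 2 (A + B + 1) with hg
  set d := C * (g + 3) with hd
  refine ⟨2 ^ (2 * (C + d) + 1), fun k hk => ?_⟩
  have hk2 : 2 ≤ k := le_trans (by
    calc (2:ℕ) = 2 ^ 1 := by norm_num
      _ ≤ 2 ^ (2 * (C + d) + 1) := Nat.pow_le_pow_right (by norm_num) (by omega)) hk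
  have hk0 : 0 < k := by omega
  set t := Nat.log 2 k with ht
  -- t is large
  have htlarge : 2 * (C + d) + 1 ≤ t := by
    calc 2 * (C + d) + 1 = Nat.log 2 (2 ^ (2 * (C + d) + 1)) := (Nat.log_pow (by norm_num) _).symm
      _ ≤ t := Nat.log_mono_right hk
  -- bound the log
  have step1 : A + k * B ≤ (A + B + 1) * k := by
    have h1 : A ≤ A * k := Nat.le_mul_of_pos_right A hk0
    have h2 : (A + B + 1) * k = A * k + B * k + k := by ring
    have h3 : k * B = B * k := by ring
    omega
  have step2 : Nat.log p (A + k * B) ≤ Nat.log 2 ((A + B + 1) * k) :=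
    le_trans (Nat.log_anti_left (by norm_num) hp) (Nat.log_mono_right step1)
  have step3 : Nat.log 2 ((A + B + 1) * k) ≤ g + t + 1 := by
    have h1 : (A + B + 1) * k < 2 ^ (g + 1) * 2 ^ (t + 1) :=
      Nat.mul_lt_mul'' (Nat.lt_pow_succ_log_self (by norm_num) _)
        (Nat.lt_pow_succ_log_self (by norm_num) _)
    have h2 : 2 ^ (g + 1) * 2 ^ (t + 1) = 2 ^ (g + t + 2) := by
      rw [← pow_add]; ring_nf
    have h3 : (A + B + 1) * k ≠ 0 := by positivity
    have h4 := Nat.log_lt_of_lt_pow h3 (h2 ▸ h1)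
    omega
  have step4 : C * (Nat.log p (A + k * B) + 2) ≤ C * t + d := by
    have h1 : Nat.log p (A + k * B) + 2 ≤ t + g + 3 := by omega
    calc C * (Nat.log p (A + k * B) + 2) ≤ C * (t + g + 3) := Nat.mul_le_mul_left C h1
      _ = C * t + d := by rw [hd]; ring
  have step5 : C * t + d ≤ (C + d) * t := by
    have h1 : d ≤ d * t := Nat.le_mul_of_pos_right d (by omega)
    have h2 : (C + d) * t = C * t + d * t := by ring
    omega
  have step6 : (C + d) * t ≤ 2 ^ t := lin_le_pow (C + d) t (by omega)
  have step7 : 2 ^ t ≤ k := Nat.pow_log_le_self 2 (by omega)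
  omega

lemma key_cast (x : ℚ) (t : ℕ) :
    ((x.num + t * x.den : ℤ) : ℚ) = (x + t) * (x.den : ℚ) := by
  have hden : (x.den : ℚ) ≠ 0 := by exact_mod_cast x.den_nz
  have h1 : x * (x.den : ℚ) = (x.num : ℚ) := by
    nth_rewrite 1 [← Rat.num_div_den x]
    rw [div_mul_cancel₀ _ hden]
  push_cast
  rw [add_mul, h1]

lemma factor_ne (x : ℚ) (hxZ : ∀ l : ℕ, x ≠ -(l:ℚ)) (t : ℕ) : x + (t:ℚ) ≠ 0 := by
  intro h0
  exact hxZ t (by linarith)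

lemma int_ne (x : ℚ) (hxZ : ∀ l : ℕ, x ≠ -(l:ℚ)) (t : ℕ) : x.num + t * x.den ≠ 0 := by
  intro h0
  have h1 := key_cast x t
  rw [h0] at h1
  have hden : (x.den : ℚ) ≠ 0 := by
    exact_mod_cast x.den_nz
  have : x + t = 0 := by
    rcases mul_eq_zero.mp h1.symm with h | h
    · exact h
    · exact absurd h hden
  exact factor_ne x hxZ t this

lemma pval_factor (p : ℕ) [Fact p.Prime] (x : ℚ) (hden : ¬ p ∣ x.den)
    (hxZ : ∀ l : ℕ, x ≠ -(l:ℚ)) (t : ℕ) :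
    padicValRat p (x + t) = padicValInt p (x.num + t * x.den) := by
  have hdQ : ((x.den : ℤ) : ℚ) ≠ 0 := by
    exact_mod_cast x.den_nz
  have hNQ : ((x.num + t * x.den : ℤ) : ℚ) ≠ 0 := by
    exact_mod_cast int_ne x hxZ t
  have hxt : x + (t:ℚ) = ((x.num + t * x.den : ℤ) : ℚ) / ((x.den : ℤ) : ℚ) := by
    rw [eq_div_iff hdQ]
    rw [key_cast x t]
    push_cast
    ring
  rw [hxt, padicValRat.div hNQ hdQ, padicValRat.of_int, padicValRat.of_int,
    padicValInt.of_nat, padicValNat.eq_zero_of_not_dvd hden]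
  simp

lemma padicValRat_prod (p : ℕ) [Fact p.Prime] {ι : Type*} (s : Finset ι) (f : ι → ℚ)
    (hf : ∀ i ∈ s, f i ≠ 0) :
    padicValRat p (∏ i ∈ s, f i) = ∑ i ∈ s, padicValRat p (f i) := by
  classical
  induction s using Finset.induction with
  | empty => simp
  | insert _ _ hx ih =>
    rename_i a s
    rw [prod_insert hx, sum_insert hx,
      padicValRat.mul (hf a (mem_insert_self a s))
        (prod_ne_zero_iff.mpr fun i hi => hf i (mem_insert_of_mem hi)),
      ih fun i hi => hf i (mem_insert_of_mem hi)]

lemma asc_eval_prod (k : ℕ) (r : ℚ) :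
    (ascPochhammer ℚ k).eval r = ∏ t ∈ range k, (r + t) := by
  induction k with
  | zero => simp
  | succ k ih => rw [ascPochhammer_succ_eval, ih, prod_range_succ]

lemma pval_poch (p : ℕ) [Fact p.Prime] (x : ℚ) (hden : ¬ p ∣ x.den)
    (hxZ : ∀ l : ℕ, x ≠ -(l:ℚ)) (k : ℕ) :
    padicValRat p ((ascPochhammer ℚ k).eval x) =
      ((∑ t ∈ range k, padicValInt p (x.num + t * x.den) : ℕ) : ℤ) := by
  rw [asc_eval_prod, padicValRat_prod p _ _ (fun t _ => factor_ne x hxZ t)]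
  rw [Nat.cast_sum]
  exact Finset.sum_congr rfl (fun t _ => pval_factor p x hden hxZ t)

lemma poch_ne (x : ℚ) (hxZ : ∀ l : ℕ, x ≠ -(l:ℚ)) (k : ℕ) :
    (ascPochhammer ℚ k).eval x ≠ 0 := by
  rw [asc_eval_prod]
  exact prod_ne_zero_iff.mpr (fun t _ => factor_ne x hxZ t)

lemma exists_residue (q : ℕ) (hq : 1 < q) (a : ℤ) (b : ℕ)
    (hb : IsUnit (b : ZMod q)) :
    ∃ r < q, ∀ t : ℕ, ((q : ℤ) ∣ a + t * b ↔ t % q = r) := by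
  haveI : NeZero q := ⟨by omega⟩
  obtain ⟨u, hu⟩ := hb
  set c : ZMod q := ((u⁻¹ : (ZMod q)ˣ) : ZMod q) with hc
  have hcb : c * (b : ZMod q) = 1 := by
    rw [hc, ← hu, ← Units.val_mul, inv_mul_cancel, Units.val_one]
  refine ⟨((-a : ZMod q) * c).val, ZMod.val_lt _, fun t => ?_⟩
  rw [← ZMod.intCast_zmod_eq_zero_iff_dvd]
  push_cast
  constructor
  · intro h0
    have h1 : (t : ZMod q) * b = -a := by linear_combination h0
    have h2 : (t : ZMod q) = (-a : ℤ) * c := by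
      calc (t : ZMod q) = (t : ZMod q) * b * c := by rw [mul_assoc, mul_comm (b : ZMod q) c, hcb, mul_one]
        _ = (-a : ℤ) * c := by rw [h1]; push_cast; ring
    rw [← ZMod.val_natCast, h2]
    push_cast
    rfl
  · intro h1
    have h2 : (t : ZMod q) = ((-a : ZMod q) * c) := by
      conv_lhs => rw [← Nat.mod_add_div t q]
      push_cast
      rw [h1, ZMod.natCast_val, ZMod.natCast_self]
      simp [ZMod.cast_id]
    rw [h2]
    have h3 : ((-a : ZMod q) * c) * (b : ZMod q) = -a := by
      rw [mul_assoc, hcb, mul_one]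
    rw [h3]
    ring

lemma core (p : ℕ) (hp : p.Prime) (a : ℤ) (b : ℕ) (hb : ¬ p ∣ b)
    (hnz : ∀ t : ℕ, a + t * b ≠ 0) (k E : ℕ) (hk : k < p ^ E)
    (hbound : ∀ t < k, (a + t * b).natAbs < p ^ E) :
    k ≤ (p - 1) * (∑ t ∈ range k, padicValInt p (a + t * b)) + 2 * E * (p - 1) ∧
    (p - 1) * (∑ t ∈ range k, padicValInt p (a + t * b)) ≤ k + E * (p - 1) := by
  haveI : Fact p.Prime := ⟨hp⟩
  have hp2 : 2 ≤ p := hp.two_le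
  -- step A : valuation as a card
  have stepA : ∀ t < k, padicValInt p (a + t * b) =
      ((Icc 1 E).filter (fun e => p ^ e ∣ (a + t * b).natAbs)).card := by
    intro t ht
    have hA0 : (a + t * b).natAbs ≠ 0 := Int.natAbs_ne_zero.mpr (hnz t)
    have hv : padicValInt p (a + t * b) = padicValNat p (a + t * b).natAbs := rfl
    set v := padicValNat p (a + t * b).natAbs with hvdef
    have hvE : v ≤ E := by
      have h1 : p ^ v ≤ (a + t * b).natAbs :=
        Nat.le_of_dvd (Nat.pos_of_ne_zero hA0) pow_padicValNat_dvd
      have h2 : p ^ v < p ^ E := lt_of_le_of_lt h1 (hbound t ht)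
      exact le_of_lt ((Nat.pow_lt_pow_iff_right hp2).mp h2)
    have hset : (Icc 1 E).filter (fun e => p ^ e ∣ (a + t * b).natAbs) = Icc 1 v := by
      ext e
      simp only [mem_filter, mem_Icc]
      constructor
      · rintro ⟨⟨h1, h2⟩, hdvd⟩
        rcases (padicValNat_dvd_iff e (a + t * b).natAbs).mp hdvd with h | h
        · exact absurd h hA0
        · exact ⟨h1, h⟩
      · rintro ⟨h1, h2⟩
        exact ⟨⟨h1, le_trans h2 hvE⟩,
          (padicValNat_dvd_iff e (a + t * b).natAbs).mpr (Or.inr h2)⟩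
    rw [hv, hset, Nat.card_Icc]
    omega
  -- step B : swap sums
  have stepB : ∑ t ∈ range k, padicValInt p (a + t * b) =
      ∑ e ∈ Icc 1 E, ((range k).filter (fun t : ℕ => p ^ e ∣ (a + t * b).natAbs)).card := by
    rw [Finset.sum_congr rfl (fun t ht => stepA t (mem_range.mp ht))]
    simp only [Finset.card_filter]
    rw [Finset.sum_comm]
  -- step C : per-e bounds
  have stepC : ∀ e ∈ Icc 1 E,
      (k / p ^ e ≤ ((range k).filter (fun t : ℕ => p ^ e ∣ (a + t * b).natAbs)).card + 1) ∧
      ((range k).filter (fun t : ℕ => p ^ e ∣ (a + t * b).natAbs)).card ≤ k / p ^ e + 1 := by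
    intro e he
    rw [mem_Icc] at he
    have hq1 : 1 < p ^ e := Nat.one_lt_pow (by omega) hp2
    have hq0 : 0 < p ^ e := by omega
    have hunit : IsUnit ((b : ℕ) : ZMod (p ^ e)) := by
      rw [ZMod.isUnit_iff_coprime]
      exact Nat.Coprime.pow_right e ((hp.coprime_iff_not_dvd.mpr hb).symm)
    obtain ⟨r, hr, hiff⟩ := exists_residue (p ^ e) hq1 a b hunit
    have hfe : (range k).filter (fun t : ℕ => p ^ e ∣ (a + t * b).natAbs) =
        (range k).filter (fun t => t % p ^ e = r) := by
      apply Finset.filter_congr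
      intro t _
      rw [← hiff t]
      exact Int.natCast_dvd.symm
    obtain ⟨hlo, hhi⟩ := card_filter_mod k (p ^ e) r hr
    rw [hfe]
    set S := ((range k).filter (fun t => t % p ^ e = r)).card with hS
    constructor
    · have := Nat.div_le_div_right (c := p ^ e) hlo
      rwa [Nat.mul_div_cancel _ hq0] at this
    · have := Nat.div_le_div_right (c := p ^ e) hhi
      rwa [Nat.mul_div_cancel _ hq0, Nat.add_div_right _ hq0] at this
  -- assemble
  set V := ∑ t ∈ range k, padicValInt p (a + t * b) with hV
  set T := ∑ e ∈ Icc 1 E, k / p ^ e with hT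
  have hTV : T ≤ V + E := by
    rw [stepB, hT]
    calc ∑ e ∈ Icc 1 E, k / p ^ e
        ≤ ∑ e ∈ Icc 1 E, (((range k).filter (fun t : ℕ => p ^ e ∣ (a + t * b).natAbs)).card + 1) :=
          Finset.sum_le_sum (fun e he => (stepC e he).1)
      _ = (∑ e ∈ Icc 1 E, ((range k).filter (fun t : ℕ => p ^ e ∣ (a + t * b).natAbs)).card) + E := by
          rw [Finset.sum_add_distrib, Finset.sum_const, Nat.card_Icc]; simp [mul_comm]
  have hVT : V ≤ T + E := by
    rw [stepB, hT]
    calc ∑ e ∈ Icc 1 E, ((range k).filter (fun t : ℕ => p ^ e ∣ (a + t * b).natAbs)).card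
        ≤ ∑ e ∈ Icc 1 E, (k / p ^ e + 1) := Finset.sum_le_sum (fun e he => (stepC e he).2)
      _ = T + E := by rw [Finset.sum_add_distrib, Finset.sum_const, Nat.card_Icc]; simp [mul_comm, hT]
  have hgu := geom_upper p k hp2 E
  have hgl := geom_lower p k hp2 E
  have hkE : k / p ^ E = 0 := Nat.div_eq_of_lt hk
  rw [← hT] at hgu hgl
  rw [hkE] at hgu hgl
  have e1 : (p - 1) * T ≤ (p - 1) * (V + E) := Nat.mul_le_mul_left _ hTV
  have e2 : (p - 1) * V ≤ (p - 1) * (T + E) := Nat.mul_le_mul_left _ hVT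
  have e3 : (p - 1) * (V + E) = (p - 1) * V + (p - 1) * E := Nat.mul_add _ _ _
  have e4 : (p - 1) * (T + E) = (p - 1) * T + (p - 1) * E := Nat.mul_add _ _ _
  have e5 : 2 * E * (p - 1) = (p - 1) * E + (p - 1) * E := by ring
  have e6 : E * (p - 1) = (p - 1) * E := by ring
  omega

theorem reduction_is_polynomial_of_negative_drift
    (p : ℕ) (hp : p.Prime) (n m : ℕ) (hmn : m < n)
    (α : Fin n → ℚ) (β : Fin m → ℚ)
    (hα : ∀ i, ¬ p ∣ (α i).den) (hβ : ∀ j, ¬ p ∣ (β j).den)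
    (hαZ : ∀ i (l : ℕ), α i ≠ -(l : ℚ)) (hβZ : ∀ j (l : ℕ), β j ≠ -(l : ℚ))
    (h : ℕ → ℚ)
    (hh : ∀ k, h k = (∏ i, (ascPochhammer ℚ k).eval (α i)) /
      (∏ j, (ascPochhammer ℚ k).eval (β j)))
    (hgood : ∀ k, ¬ p ∣ (h k).den) :
    ∃ K : ℕ, ∀ k : ℕ, K ≤ k → h k = 0 ∨ 1 ≤ padicValRat p (h k) := by
  haveI : Fact p.Prime := ⟨hp⟩
  have hp2 : 2 ≤ p := hp.two_le
  set A := 1 + (∑ i, (α i).num.natAbs) + (∑ j, (β j).num.natAbs) with hA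
  set B := 1 + (∑ i, (α i).den) + (∑ j, (β j).den) with hB
  obtain ⟨K, hK⟩ := event p ((p - 1) * (2 * n + m + 1)) A B hp2
  refine ⟨K, fun k hk => Or.inr ?_⟩
  set E := Nat.log p (A + k * B) + 1 with hE
  have hAkB : A + k * B < p ^ E := by
    rw [hE]
    exact Nat.lt_pow_succ_log_self hp2 _
  have hkpE : k < p ^ E := by
    have h1 : k ≤ k * B := Nat.le_mul_of_pos_right k (by omega)
    omega
  -- uniform bound on integer shifts
  have hboundgen : ∀ x : ℚ, x.num.natAbs < A → x.den ≤ B →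
      ∀ t, t < k → (x.num + t * x.den).natAbs < p ^ E := by
    intro x hxA hxB t ht
    have h1 : (x.num + (t : ℤ) * x.den).natAbs ≤ x.num.natAbs + t * x.den := by
      have h2 := Int.natAbs_add_le x.num ((t : ℤ) * x.den)
      have h3 : ((t : ℤ) * (x.den : ℤ)).natAbs = t * x.den := by
        rw [Int.natAbs_mul, Int.natAbs_natCast, Int.natAbs_natCast]
      omega
    have h4 : t * x.den ≤ k * B := Nat.mul_le_mul (le_of_lt ht) hxB
    omega
  -- num/den bounds for each parameter
  have hnumα : ∀ i, (α i).num.natAbs < A := by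
    intro i
    have h1 : (α i).num.natAbs ≤ ∑ i', (α i').num.natAbs :=
      Finset.single_le_sum (f := fun i' => (α i').num.natAbs)
        (fun _ _ => Nat.zero_le _) (mem_univ i)
    omega
  have hnumβ : ∀ j, (β j).num.natAbs < A := by
    intro j
    have h1 : (β j).num.natAbs ≤ ∑ j', (β j').num.natAbs :=
      Finset.single_le_sum (f := fun j' => (β j').num.natAbs)
        (fun _ _ => Nat.zero_le _) (mem_univ j)
    omega
  have hdenα : ∀ i, (α i).den ≤ B := by
    intro i
    have h1 : (α i).den ≤ ∑ i', (α i').den :=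
      Finset.single_le_sum (f := fun i' => (α i').den)
        (fun _ _ => Nat.zero_le _) (mem_univ i)
    omega
  have hdenβ : ∀ j, (β j).den ≤ B := by
    intro j
    have h1 : (β j).den ≤ ∑ j', (β j').den :=
      Finset.single_le_sum (f := fun j' => (β j').den)
        (fun _ _ => Nat.zero_le _) (mem_univ j)
    omega
  -- core bounds
  set VA : Fin n → ℕ :=
    fun i => ∑ t ∈ range k, padicValInt p ((α i).num + t * (α i).den) with hVA
  set VB : Fin m → ℕ :=
    fun j => ∑ t ∈ range k, padicValInt p ((β j).num + t * (β j).den) with hVB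
  have hcoreα : ∀ i, k ≤ (p - 1) * VA i + 2 * E * (p - 1) :=
    fun i => (core p hp (α i).num (α i).den (hα i) (fun t => int_ne (α i) (hαZ i) t)
      k E hkpE (hboundgen (α i) (hnumα i) (hdenα i))).1
  have hcoreβ : ∀ j, (p - 1) * VB j ≤ k + E * (p - 1) :=
    fun j => (core p hp (β j).num (β j).den (hβ j) (fun t => int_ne (β j) (hβZ j) t)
      k E hkpE (hboundgen (β j) (hnumβ j) (hdenβ j))).2
  -- valuation of h k
  have hnum0 : (∏ i, (ascPochhammer ℚ k).eval (α i)) ≠ 0 :=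
    prod_ne_zero_iff.mpr fun i _ => poch_ne (α i) (hαZ i) k
  have hden0 : (∏ j, (ascPochhammer ℚ k).eval (β j)) ≠ 0 :=
    prod_ne_zero_iff.mpr fun j _ => poch_ne (β j) (hβZ j) k
  set SA : ℤ := ∑ i, ((VA i : ℕ) : ℤ) with hSA
  set SB : ℤ := ∑ j, ((VB j : ℕ) : ℤ) with hSB
  have hW : padicValRat p (h k) = SA - SB := by
    rw [hh k, padicValRat.div hnum0 hden0,
      padicValRat_prod p _ _ (fun i _ => poch_ne (α i) (hαZ i) k),
      padicValRat_prod p _ _ (fun j _ => poch_ne (β j) (hβZ j) k),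
      hSA, hSB]
    congr 1
    · exact Finset.sum_congr rfl fun i _ => pval_poch p (α i) (hα i) (hαZ i) k
    · exact Finset.sum_congr rfl fun j _ => pval_poch p (β j) (hβ j) (hβZ j) k
  rw [hW]
  -- final arithmetic over ℤ
  set c : ℤ := ((p - 1 : ℕ) : ℤ) with hc
  have hc1 : 1 ≤ c := by rw [hc]; exact_mod_cast (by omega : 1 ≤ p - 1)
  set X : ℤ := (E : ℤ) * c with hX
  have hX0 : 0 ≤ X := by positivity
  have HA : ∀ i, (k : ℤ) ≤ c * (VA i : ℤ) + 2 * (E : ℤ) * c := by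
    intro i
    have := hcoreα i
    rw [hc]
    exact_mod_cast this
  have HB : ∀ j, c * (VB j : ℤ) ≤ (k : ℤ) + (E : ℤ) * c := by
    intro j
    have := hcoreβ j
    rw [hc]
    exact_mod_cast this
  have HSA : (n : ℤ) * k ≤ c * SA + 2 * ((n : ℤ) * X) := by
    have h1 := Finset.sum_le_sum (fun i (_ : i ∈ univ) => HA i)
    rw [Finset.sum_const, Finset.sum_add_distrib, ← Finset.mul_sum, Finset.sum_const,
      Finset.card_univ, Fintype.card_fin] at h1
    simp only [nsmul_eq_mul] at h1
    rw [hSA, hX]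
    nlinarith [h1]
  have HSB : c * SB ≤ (m : ℤ) * k + (m : ℤ) * X := by
    have h1 := Finset.sum_le_sum (fun j (_ : j ∈ univ) => HB j)
    rw [Finset.sum_add_distrib, ← Finset.mul_sum, Finset.sum_const, Finset.sum_const,
      Finset.card_univ, Fintype.card_fin] at h1
    simp only [nsmul_eq_mul] at h1
    rw [hSB, hX]
    nlinarith [h1]
  have HEV0 := hK k hk
  have HEV1 : ((p - 1) * (2 * n + m + 1) : ℕ) * (E + 1) ≤ k := by
    rw [hE]; convert HEV0 using 2
  have HEV : c * (2 * (n : ℤ) + m + 1) * ((E : ℤ) + 1) ≤ k := by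
    rw [hc]
    exact_mod_cast HEV1
  have HEV' : 2 * ((n : ℤ) * X) + (m : ℤ) * X + X
      + 2 * ((n : ℤ) * c) + (m : ℤ) * c + c ≤ k := by
    have hexp : c * (2 * (n : ℤ) + m + 1) * ((E : ℤ) + 1)
        = 2 * ((n : ℤ) * X) + (m : ℤ) * X + X
          + 2 * ((n : ℤ) * c) + (m : ℤ) * c + c := by
      rw [hX]; ring
    linarith [hexp ▸ HEV]
  have H4 : (k : ℤ) ≤ (n : ℤ) * k - (m : ℤ) * k := by
    have h0 : (0 : ℤ) ≤ ((n : ℤ) - m - 1) * k :=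
      mul_nonneg (by push_cast; omega) (by positivity)
    nlinarith [h0]
  have hnc : (0 : ℤ) ≤ (n : ℤ) * c := by positivity
  have hmc : (0 : ℤ) ≤ (m : ℤ) * c := by positivity
  have hmX : (0 : ℤ) ≤ (m : ℤ) * X := by positivity
  have hfinal : c ≤ c * SA - c * SB := by linarith
  by_contra hcon
  push_neg at hcon
  have h7 : SA - SB ≤ 0 := by omega
  have h8 : c * (SA - SB) ≤ 0 :=
    mul_nonpos_iff.mpr (Or.inl ⟨by linarith, h7⟩)
  have h9 : c * (SA - SB) = c * SA - c * SB := by ring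
  linarith
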